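/- arXiv:2407.06285 — 4 statements merged into one kernel-verified Lean document; each statement's English description precedes it below -/
import Mathlib

section
/- Let f : P → Q be a cartesian monotone map of posets, and let y ∈ Q. If x, x' ∈ f⁻¹(y) and z is a minimal upper bound of x and x' in P, then f(z) = y. -/
def IsCartesianMap {P Q : Type*} [PartialOrder P] [PartialOrder Q] (f : P → Q) : Prop :=
  ∀ x : P, ∀ y : Q, y ≤ f x →
    ∃ y' : P, y' ≤ x ∧ f y' = y ∧ ∀ z : P, z ≤ x → f z ≤ y → z ≤ y'

/-- a minimal upper bound (in `P`) of two elements of a fibre of a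
cartesian monotone map again lies in that fibre. -/
theorem minimal_upper_bound_mem_fibre {P Q : Type*} [PartialOrder P] [PartialOrder Q]
    (f : P → Q) (hmono : Monotone f) (hcart : IsCartesianMap f)
    (y : Q) (x x' z : P) (hx : f x = y) (hx' : f x' = y)
    (hxz : x ≤ z) (hx'z : x' ≤ z)
    (hmin : ∀ z' : P, x ≤ z' → x' ≤ z' → z' ≤ z → z' = z) :
    f z = y := by
  obtain ⟨y', hy'z, hfy', huniv⟩ := hcart z y (hx ▸ hmono hxz)
  have h1 : x ≤ y' := huniv x hxz (le_of_eq hx)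
  have h2 : x' ≤ y' := huniv x' hx'z (le_of_eq hx')
  rw [← hmin y' h1 h2 hy'z, hfy']
end

section
/- Let C be an Eilenberg–Zilber category, X a presheaf on C, and x : c → X a 'cell' (element x ∈ X(c) viewed as a morphism from the representable). Then there is a unique pair (p : c → c' in C⁻, y ∈ X(c')) with x = y · p (restriction of y along p) and y non-degenerate, where y is non-degenerate if whenever y = z · q with q in C⁻, q is an identity. -/
open CategoryTheory Opposite

structure EZStruct (C : Type*) [Category C] where
  plus : CategoryTheory.MorphismProperty C
  minus : CategoryTheory.MorphismProperty C
  d : C → ℕ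
  plus_id : ∀ c : C, plus (𝟙 c)
  minus_id : ∀ c : C, minus (𝟙 c)
  plus_comp : ∀ {a b c : C} (f : a ⟶ b) (g : b ⟶ c), plus f → plus g → plus (f ≫ g)
  minus_comp : ∀ {a b c : C} (f : a ⟶ b) (g : b ⟶ c), minus f → minus g → minus (f ≫ g)
  ez0 : ∀ {a b : C} (f : a ⟶ b), IsIso f → plus f ∧ minus f
  ez0_d : ∀ {a b : C} (f : a ⟶ b), IsIso f → d a = d b
  ez1_plus : ∀ {a b : C} (f : a ⟶ b), plus f → d b ≤ d a → ∃ h : a = b, f = eqToHom h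
  ez1_minus : ∀ {a b : C} (f : a ⟶ b), minus f → d a ≤ d b → ∃ h : a = b, f = eqToHom h
  ez2 : ∀ {a b : C} (f : a ⟶ b),
    ∃! w : Σ c : C, (a ⟶ c) × (c ⟶ b),
      minus w.2.1 ∧ plus w.2.2 ∧ w.2.1 ≫ w.2.2 = f
  ez3_section : ∀ {a b : C} (p : a ⟶ b), minus p → ∃ s : b ⟶ a, s ≫ p = 𝟙 b
  ez3_eq : ∀ {a b : C} (p p' : a ⟶ b), minus p → minus p' →
    (∀ s : b ⟶ a, s ≫ p = 𝟙 b ↔ s ≫ p' = 𝟙 b) → p = p'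

/-- A cell `y ∈ X(c)` of a presheaf is *non-degenerate* if whenever `y` is the
restriction of some cell along a degeneracy, that degeneracy is an identity. -/
def EZStruct.NonDeg {C : Type u} [Category.{v} C] (E : EZStruct C)
    (X : Cᵒᵖ ⥤ Type w) {c : C} (y : X.obj (op c)) : Prop :=
  ∀ ⦃c' : C⦄ (q : c ⟶ c') (z : X.obj (op c')),
    E.minus q → X.map q.op z = y → ∃ h : c = c', q = eqToHom h


/-- Existence part. -/
theorem EZStruct.exists_nonDeg_decomp {C : Type u} [Category.{v} C]
    (E : EZStruct C) (X : Cᵒᵖ ⥤ Type w) {c : C} (x : X.obj (op c)) :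
    ∃ (c' : C) (p : c ⟶ c') (y : X.obj (op c')),
      E.minus p ∧ E.NonDeg X y ∧ X.map p.op y = x := by
  suffices H : ∀ n : ℕ, ∀ {c : C} (x : X.obj (op c)), E.d c = n →
      ∃ (c' : C) (p : c ⟶ c') (y : X.obj (op c')),
        E.minus p ∧ E.NonDeg X y ∧ X.map p.op y = x from H (E.d c) x rfl
  intro n
  induction n using Nat.strong_induction_on with
  | _ n ih =>
    intro c x hc
    by_cases hnd : E.NonDeg X x
    · exact ⟨c, 𝟙 c, x, E.minus_id c, hnd, by simp⟩
    · simp only [EZStruct.NonDeg, not_forall] at hnd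
      obtain ⟨c'', q, z, hq, hz, hne⟩ := hnd
      have hlt : E.d c'' < E.d c := by
        by_contra h
        exact hne (E.ez1_minus q hq (not_lt.mp h))
      obtain ⟨c', p, y, hp, hy, hxy⟩ := ih (E.d c'') (hc ▸ hlt) z rfl
      refine ⟨c', q ≫ p, y, E.minus_comp q p hq hp, hy, ?_⟩
      rw [op_comp, FunctorToTypes.map_comp_apply, hxy, hz]

/-- Key step for uniqueness. -/
theorem EZStruct.stepA {C : Type u} [Category.{v} C]
    (E : EZStruct C) (X : Cᵒᵖ ⥤ Type w) {c c1 c2 : C}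
    (p1 : c ⟶ c1) (p2 : c ⟶ c2) (y1 : X.obj (op c1)) (y2 : X.obj (op c2))
    (hy2 : E.NonDeg X y2) (heq : X.map p1.op y1 = X.map p2.op y2)
    (s : c2 ⟶ c) (hs : s ≫ p2 = 𝟙 c2) :
    ∃ β : c2 ⟶ c1, E.plus β ∧ s ≫ p1 = β ∧ y2 = X.map β.op y1 := by
  have key : X.map (s ≫ p1).op y1 = y2 := by
    rw [op_comp, FunctorToTypes.map_comp_apply, heq,
      ← FunctorToTypes.map_comp_apply, ← op_comp, hs]
    simp
  obtain ⟨⟨m, α, β⟩, ⟨hα, hβ, hfac⟩, -⟩ := E.ez2 (s ≫ p1)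
  have key' : X.map α.op (X.map β.op y1) = y2 := by
    rw [← FunctorToTypes.map_comp_apply, ← op_comp, hfac, key]
  obtain ⟨h, hα'⟩ := hy2 α (X.map β.op y1) hα key'
  refine ⟨eqToHom h ≫ β, E.plus_comp _ _ (E.ez0 _ inferInstance).1 hβ, ?_, ?_⟩
  · rw [← hfac, hα']
  · rw [← key, ← hfac, hα']

theorem EZStruct.uniq_nonDeg_decomp {C : Type u} [Category.{v} C]
    (E : EZStruct C) (X : Cᵒᵖ ⥤ Type w) {c c1 c2 : C}
    (p1 : c ⟶ c1) (p2 : c ⟶ c2) (y1 : X.obj (op c1)) (y2 : X.obj (op c2))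
    (hp1 : E.minus p1) (hp2 : E.minus p2)
    (hy1 : E.NonDeg X y1) (hy2 : E.NonDeg X y2)
    (heq : X.map p1.op y1 = X.map p2.op y2) :
    (⟨c1, p1, y1⟩ : Σ c' : C, (c ⟶ c') × X.obj (op c')) = ⟨c2, p2, y2⟩ := by
  obtain ⟨s2, hs2⟩ := E.ez3_section p2 hp2
  obtain ⟨s1, hs1⟩ := E.ez3_section p1 hp1
  obtain ⟨β, hβ, hsβ, hy2β⟩ := E.stepA X p1 p2 y1 y2 hy2 heq s2 hs2
  obtain ⟨β', hβ', hsβ', hy1β'⟩ := E.stepA X p2 p1 y2 y1 hy1 heq.symm s1 hs1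
  -- β : c2 ⟶ c1 and β' : c1 ⟶ c2 are mutually inverse plus morphisms
  have hββ' : β ≫ β' = 𝟙 c2 := by
    obtain ⟨h, hh⟩ := E.ez1_plus (β ≫ β') (E.plus_comp _ _ hβ hβ') le_rfl
    simpa using hh
  have hβ'β : β' ≫ β = 𝟙 c1 := by
    obtain ⟨h, hh⟩ := E.ez1_plus (β' ≫ β) (E.plus_comp _ _ hβ' hβ) le_rfl
    simpa using hh
  have hiso : IsIso β := ⟨β', hββ', hβ'β⟩
  have hd : E.d c2 = E.d c1 := E.ez0_d β hiso
  obtain ⟨h, hβid⟩ := E.ez1_plus β hβ hd.ge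
  subst h
  simp only [eqToHom_refl] at hβid
  subst hβid
  have hβ'id : β' = 𝟙 c2 := by simpa using hβ'β
  subst hβ'id
  -- now show p1 = p2 via ez3_eq
  have hpp : p1 = p2 := by
    refine E.ez3_eq p1 p2 hp1 hp2 fun s => ⟨?_, ?_⟩
    · intro hs
      obtain ⟨γ, hγ, hsγ, -⟩ := E.stepA X p2 p1 y2 y1 hy1 heq.symm s hs
      have : γ = 𝟙 c2 := by
        obtain ⟨h, hh⟩ := E.ez1_plus γ hγ le_rfl
        simpa using hh
      rw [hsγ, this]
    · intro hs
      obtain ⟨γ, hγ, hsγ, -⟩ := E.stepA X p1 p2 y1 y2 hy2 heq s hs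
      have : γ = 𝟙 c2 := by
        obtain ⟨h, hh⟩ := E.ez1_plus γ hγ le_rfl
        simpa using hh
      rw [hsγ, this]
  have hyy : y1 = y2 := by simpa using hy2β.symm
  rw [hpp, hyy]

/-- Eilenberg–Zilber lemma: every cell of a presheaf on an
Eilenberg–Zilber category has a unique decomposition as the restriction of a
non-degenerate cell along a degeneracy. -/
theorem EZStruct.existsUnique_nonDeg_decomposition {C : Type u} [Category.{v} C]
    (E : EZStruct C) (X : Cᵒᵖ ⥤ Type w) {c : C} (x : X.obj (op c)) :
    ∃! w : Σ c' : C, (c ⟶ c') × X.obj (op c'),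
      E.minus w.2.1 ∧ E.NonDeg X w.2.2 ∧ X.map w.2.1.op w.2.2 = x := by
  obtain ⟨c', p, y, hp, hy, hxy⟩ := E.exists_nonDeg_decomp X x
  refine ⟨⟨c', p, y⟩, ⟨hp, hy, hxy⟩, ?_⟩
  rintro ⟨c'', p', y'⟩ ⟨hp', hy', hxy'⟩
  exact E.uniq_nonDeg_decomp X p' p y' y hp' hp hy' hy (by rw [hxy, hxy'])
end

section
/- Let f : X → Y and f' : X' → Y' be monomorphisms in a presheaf category equipped with a biclosed monoidal structure ⊗ that preserves monomorphisms in each variable and preserves colimits in each variable, and suppose the square expressing compatibility (X ⊗ X' as the pullback of X ⊗ Y' and Y ⊗ X' over Y ⊗ Y') holds. Then the pushout-product f ⊗̂ f' : (X ⊗ Y') ∪_{X ⊗ X'} (Y ⊗ X') → Y ⊗ Y' is a monomorphism. -/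
open CategoryTheory CategoryTheory.Limits

/-- Auxiliary lemma in `Type u`: given a pullback square of injective maps
`i1 : A ⟶ Z`, `i2 : B ⟶ Z` over `P`, the map out of any pushout of the
pullback projections into `Z` is injective. -/
lemma aux_injective_of_isPullback {P A B Z Q : Type u}
    {g1 : P ⟶ A} {g2 : P ⟶ B} {i1 : A ⟶ Z} {i2 : B ⟶ Z}
    (h : IsPullback g1 g2 i1 i2)
    (h1 : Function.Injective i1) (h2 : Function.Injective i2)
    {inl' : A ⟶ Q} {inr' : B ⟶ Q} {w : g1 ≫ inl' = g2 ≫ inr'}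
    (hc : IsColimit (PushoutCocone.mk inl' inr' w)) (d : Q ⟶ Z)
    (hd1 : inl' ≫ d = i1) (hd2 : inr' ≫ d = i2) :
    Function.Injective d := by
  have surj : ∀ x : Q, (∃ a, inl' a = x) ∨ (∃ b, inr' b = x) := by
    intro x
    obtain ⟨j, y, hy⟩ := Types.jointly_surjective _ hc x
    cases j with
    | none => exact Or.inl ⟨g1 y, hy⟩
    | some j' =>
      cases j' with
      | left => exact Or.inl ⟨y, hy⟩
      | right => exact Or.inr ⟨y, hy⟩
  have key : ∀ (a : A) (b : B), i1 a = i2 b → inl' a = inr' b := by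
    intro a b hab
    set s := (PullbackCone.IsLimit.equivPullbackObj h.isLimit).symm ⟨⟨a, b⟩, hab⟩ with hs
    have hfst : g1 s = a :=
      PullbackCone.IsLimit.equivPullbackObj_symm_apply_fst h.isLimit ⟨⟨a, b⟩, hab⟩
    have hsnd : g2 s = b :=
      PullbackCone.IsLimit.equivPullbackObj_symm_apply_snd h.isLimit ⟨⟨a, b⟩, hab⟩
    calc inl' a = inl' (g1 s) := by rw [hfst]
      _ = inr' (g2 s) := ConcreteCategory.congr_hom w s
      _ = inr' b := by rw [hsnd]
  intro x y hxy
  rcases surj x with ⟨a, rfl⟩ | ⟨b, rfl⟩ <;> rcases surj y with ⟨a', rfl⟩ | ⟨b', rfl⟩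
  · have : i1 a = i1 a' := by
      rw [← ConcreteCategory.congr_hom hd1 a, ← ConcreteCategory.congr_hom hd1 a']; exact hxy
    rw [h1 this]
  · exact key a b' (by rw [← ConcreteCategory.congr_hom hd1 a, ← ConcreteCategory.congr_hom hd2 b']; exact hxy)
  · exact (key a' b (by rw [← ConcreteCategory.congr_hom hd1 a', ← ConcreteCategory.congr_hom hd2 b]; exact hxy.symm)).symm
  · have : i2 b = i2 b' := by
      rw [← ConcreteCategory.congr_hom hd2 b, ← ConcreteCategory.congr_hom hd2 b']; exact hxy
    rw [h2 this]

/-- let `T` be a (biclosed) monoidal-type bifunctor on a presheaf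
category which preserves monomorphisms in each variable and preserves colimits in
each variable, and let `f : X ⟶ Y`, `f' : X' ⟶ Y'` be monomorphisms such that the
square expressing `X ⊗ X'` as the pullback of `X ⊗ Y'` and `Y ⊗ X'` over `Y ⊗ Y'`
holds. Then the pushout-product `f ⊗̂ f'` is a monomorphism. -/
theorem pushoutProduct_mono {C : Type u} [SmallCategory C]
    (T : (Cᵒᵖ ⥤ Type u) ⥤ (Cᵒᵖ ⥤ Type u) ⥤ (Cᵒᵖ ⥤ Type u))
    [∀ A, PreservesColimits (T.obj A)] [∀ A, PreservesColimits (T.flip.obj A)]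
    (hMonoL : ∀ (A : Cᵒᵖ ⥤ Type u) {X Y : Cᵒᵖ ⥤ Type u} (g : X ⟶ Y),
      Mono g → Mono ((T.obj A).map g))
    (hMonoR : ∀ (A : Cᵒᵖ ⥤ Type u) {X Y : Cᵒᵖ ⥤ Type u} (g : X ⟶ Y),
      Mono g → Mono ((T.map g).app A))
    {X Y X' Y' : Cᵒᵖ ⥤ Type u} (f : X ⟶ Y) (f' : X' ⟶ Y')
    (hf : Mono f) (hf' : Mono f')
    (hpb : IsPullback ((T.obj X).map f') ((T.map f).app X')
      ((T.map f).app Y') ((T.obj Y).map f')) :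
    Mono (pushout.desc ((T.map f).app Y') ((T.obj Y).map f')
      (NatTrans.naturality (T.map f) f')) := by
  set g1 : (T.obj X).obj X' ⟶ (T.obj X).obj Y' := (T.obj X).map f' with hg1
  set g2 : (T.obj X).obj X' ⟶ (T.obj Y).obj X' := (T.map f).app X' with hg2
  set i1 : (T.obj X).obj Y' ⟶ (T.obj Y).obj Y' := (T.map f).app Y' with hi1
  set i2 : (T.obj Y).obj X' ⟶ (T.obj Y).obj Y' := (T.obj Y).map f' with hi2
  haveI mono_i1 : Mono i1 := hMonoR Y' f hf
  haveI mono_i2 : Mono i2 := hMonoL Y f' hf'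
  set d := pushout.desc i1 i2 (NatTrans.naturality (T.map f) f') with hd
  have : ∀ k : Cᵒᵖ, Mono (d.app k) := by
    intro k
    set E := ((evaluation Cᵒᵖ (Type u)).obj k) with hE
    have hpbk : IsPullback (E.map g1) (E.map g2) (E.map i1) (E.map i2) := hpb.map E
    have hck := isColimitOfHasPushoutOfPreservesColimit E g1 g2
    have hd1 : E.map (pushout.inl g1 g2) ≫ E.map d = E.map i1 := by
      rw [← E.map_comp, hd, pushout.inl_desc]
    have hd2 : E.map (pushout.inr g1 g2) ≫ E.map d = E.map i2 := by
      rw [← E.map_comp, hd, pushout.inr_desc]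
    have inj1 : Function.Injective (E.map i1) :=
      (mono_iff_injective _).1 inferInstance
    have inj2 : Function.Injective (E.map i2) :=
      (mono_iff_injective _).1 inferInstance
    exact (mono_iff_injective (d.app k)).2
      (aux_injective_of_isPullback hpbk inj1 inj2 hck (E.map d) hd1 hd2)
  exact NatTrans.mono_of_mono_app d
end

section
/- Let C be a complete and cocomplete category, ⊗ a biclosed monoidal product on C, j a morphism, and I, I' sets of morphisms. If j ⊗̂ i ∈ llp(rlp(I')) for all i ∈ I, then j ⊗̂ i ∈ llp(rlp(I')) for all i ∈ llp(rlp(I)). -/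
open CategoryTheory CategoryTheory.Limits CategoryTheory.MonoidalCategory

variable {C : Type u} [Category.{v} C] [MonoidalCategory C] [HasLimits C] [HasColimits C]

/-- The pushout-product `f ⊗̂ g : (A ⊗ Y) ∪_{A ⊗ X} (B ⊗ X) ⟶ B ⊗ Y`. -/
noncomputable def pushoutProduct {A B X Y : C} (f : A ⟶ B) (g : X ⟶ Y) :
    pushout (A ◁ g) (f ▷ X) ⟶ B ⊗ Y :=
  pushout.desc (f ▷ Y) (B ◁ g) (whisker_exchange f g)

/-- The class of morphisms with the right lifting property against all members of `S`. -/
def rlpOf (S : MorphismProperty C) : MorphismProperty C :=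
  fun _ _ g => ∀ ⦃A B : C⦄ (f : A ⟶ B), S f → HasLiftingProperty f g

/-- The class of morphisms with the left lifting property against all members of `S`. -/
def llpOf (S : MorphismProperty C) : MorphismProperty C :=
  fun _ _ f => ∀ ⦃A B : C⦄ (g : A ⟶ B), S g → HasLiftingProperty f g

section Aux

variable {A B : C} (j : A ⟶ B) {RA RB : C ⥤ C}
  (adjA : tensorLeft A ⊣ RA) (adjB : tensorLeft B ⊣ RB)

/-- Restriction along `j` on internal homs. -/
noncomputable def tauAux (Z : C) : RB.obj Z ⟶ RA.obj Z :=
  (adjA.homEquiv _ _) ((j ▷ RB.obj Z) ≫ adjB.counit.app Z)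

lemma tauAux_symm (Z : C) :
    (adjA.homEquiv _ _).symm (tauAux j adjA adjB Z) =
      (j ▷ RB.obj Z) ≫ adjB.counit.app Z := by
  simp [tauAux]

lemma keyAux {Y Z : C} (u : Y ⟶ RB.obj Z) :
    (j ▷ Y) ≫ (adjB.homEquiv Y Z).symm u =
      (adjA.homEquiv Y Z).symm (u ≫ tauAux j adjA adjB Z) := by
  have h1 : (adjA.homEquiv Y Z).symm (u ≫ tauAux j adjA adjB Z) =
      (tensorLeft A).map u ≫ (adjA.homEquiv _ _).symm (tauAux j adjA adjB Z) :=
    adjA.homEquiv_naturality_left_symm u _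
  rw [h1, tauAux_symm]
  rw [adjB.homEquiv_counit]
  show (j ▷ Y) ≫ (B ◁ u) ≫ adjB.counit.app Z =
    (A ◁ u) ≫ (j ▷ RB.obj Z) ≫ adjB.counit.app Z
  rw [← Category.assoc, ← Category.assoc, whisker_exchange]

lemma tauAux_natural {Z W : C} (g : Z ⟶ W) :
    tauAux j adjA adjB Z ≫ RA.map g = RB.map g ≫ tauAux j adjA adjB W := by
  apply (adjA.homEquiv _ _).symm.injective
  rw [adjA.homEquiv_naturality_right_symm, tauAux_symm, ← keyAux]
  have h2 : (adjB.homEquiv _ _).symm (RB.map g) = adjB.counit.app Z ≫ g := by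
    have := adjB.homEquiv_naturality_right_symm (𝟙 (RB.obj Z)) g
    rw [Category.id_comp, adjB.homEquiv_symm_id] at this
    exact this
  rw [h2, Category.assoc]

/-- The pullback-hom `ĥom(j, g)`. -/
noncomputable def pbHomAux {Z W : C} (g : Z ⟶ W) :
    RB.obj Z ⟶ pullback (RA.map g) (tauAux j adjA adjB W) :=
  pullback.lift (tauAux j adjA adjB Z) (RB.map g) (tauAux_natural j adjA adjB g)

lemma hlp_iff_aux {X Y Z W : C} (i : X ⟶ Y) (g : Z ⟶ W) :
    HasLiftingProperty (pushoutProduct j i) g ↔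
      HasLiftingProperty i (pbHomAux j adjA adjB g) := by
  have hfst : pbHomAux j adjA adjB g ≫ pullback.fst _ _ = tauAux j adjA adjB Z :=
    pullback.lift_fst _ _ _
  have hsnd : pbHomAux j adjA adjB g ≫ pullback.snd _ _ = RB.map g := pullback.lift_snd _ _ _
  have hinl : pushout.inl _ _ ≫ pushoutProduct j i = j ▷ Y := pushout.inl_desc _ _ _
  have hinr : pushout.inr _ _ ≫ pushoutProduct j i = B ◁ i := pushout.inr_desc _ _ _
  constructor
  · intro hlift
    constructor
    intro f h sq
    have w := sq.w
    have comm : (A ◁ i) ≫ (adjA.homEquiv Y Z).symm (h ≫ pullback.fst _ _) =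
        (j ▷ X) ≫ (adjB.homEquiv X Z).symm f := by
      have h1 : (adjA.homEquiv X Z).symm (i ≫ h ≫ pullback.fst _ _) =
          (tensorLeft A).map i ≫ (adjA.homEquiv Y Z).symm (h ≫ pullback.fst _ _) :=
        adjA.homEquiv_naturality_left_symm i _
      have h2 : i ≫ h ≫ pullback.fst _ _ = f ≫ tauAux j adjA adjB Z := by
        rw [← Category.assoc, ← w, Category.assoc, hfst]
      rw [keyAux, ← h2, h1]
      rfl
    have sq' : CommSq (pushout.desc ((adjA.homEquiv Y Z).symm (h ≫ pullback.fst _ _))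
        ((adjB.homEquiv X Z).symm f) comm) (pushoutProduct j i) g
        ((adjB.homEquiv Y W).symm (h ≫ pullback.snd _ _)) := by
      constructor
      apply pushout.hom_ext
      · rw [← Category.assoc, ← Category.assoc, hinl, pushout.inl_desc]
        have e1 : (adjA.homEquiv Y Z).symm (h ≫ pullback.fst _ _) ≫ g =
            (adjA.homEquiv Y W).symm ((h ≫ pullback.fst _ _) ≫ RA.map g) :=
          (adjA.homEquiv_naturality_right_symm _ g).symm
        have e2 : (h ≫ pullback.fst _ _) ≫ RA.map g =
            (h ≫ pullback.snd _ _) ≫ tauAux j adjA adjB W := by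
          rw [Category.assoc, Category.assoc, pullback.condition]
        rw [e1, e2, ← keyAux]
      · rw [← Category.assoc, ← Category.assoc, hinr, pushout.inr_desc]
        have e1 : (adjB.homEquiv X Z).symm f ≫ g =
            (adjB.homEquiv X W).symm (f ≫ RB.map g) :=
          (adjB.homEquiv_naturality_right_symm f g).symm
        have e2 : f ≫ RB.map g = i ≫ h ≫ pullback.snd _ _ := by
          rw [← hsnd, ← Category.assoc, w, Category.assoc]
        have e3 : (adjB.homEquiv X W).symm (i ≫ h ≫ pullback.snd _ _) =
            (tensorLeft B).map i ≫ (adjB.homEquiv Y W).symm (h ≫ pullback.snd _ _) :=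
          adjB.homEquiv_naturality_left_symm i _
        rw [e1, e2, e3]
        rfl
    obtain ⟨⟨L, facL, facR⟩⟩ := (hlift.sq_hasLift sq').exists_lift
    refine ⟨⟨⟨(adjB.homEquiv Y Z) L, ?_, ?_⟩⟩⟩
    · -- i ≫ eB L = f
      have e1 : (B ◁ i) ≫ L = (adjB.homEquiv X Z).symm f := by
        rw [← hinr, Category.assoc, facL, pushout.inr_desc]
      apply (adjB.homEquiv X Z).symm.injective
      rw [adjB.homEquiv_naturality_left_symm i, Equiv.symm_apply_apply]
      exact e1
    · -- eB L ≫ pbHom = h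
      apply pullback.hom_ext
      · rw [Category.assoc, hfst]
        have e1 : (j ▷ Y) ≫ L =
            (adjA.homEquiv Y Z).symm ((adjB.homEquiv Y Z) L ≫ tauAux j adjA adjB Z) := by
          have := keyAux j adjA adjB ((adjB.homEquiv Y Z) L)
          rw [Equiv.symm_apply_apply] at this
          exact this
        have e2 : (j ▷ Y) ≫ L = (adjA.homEquiv Y Z).symm (h ≫ pullback.fst _ _) := by
          rw [← hinl, Category.assoc, facL, pushout.inl_desc]
        apply (adjA.homEquiv Y Z).symm.injective
        rw [← e1, e2]
      · rw [Category.assoc, hsnd]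
        apply (adjB.homEquiv Y W).symm.injective
        rw [adjB.homEquiv_naturality_right_symm, Equiv.symm_apply_apply]
        exact facR
  · intro hlift
    constructor
    intro t b sq
    have w := sq.w
    have winl : (pushout.inl _ _ ≫ t) ≫ g = (j ▷ Y) ≫ b := by
      rw [Category.assoc, w, ← Category.assoc, hinl]
    have winr : (pushout.inr _ _ ≫ t) ≫ g = (B ◁ i) ≫ b := by
      rw [Category.assoc, w, ← Category.assoc, hinr]
    have wcond : (adjA.homEquiv Y Z) (pushout.inl _ _ ≫ t) ≫ RA.map g =
        (adjB.homEquiv Y W) b ≫ tauAux j adjA adjB W := by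
      have e1 : (adjA.homEquiv Y W) ((pushout.inl _ _ ≫ t) ≫ g) =
          (adjA.homEquiv Y Z) (pushout.inl _ _ ≫ t) ≫ RA.map g :=
        adjA.homEquiv_naturality_right _ g
      rw [← e1, winl]
      apply (adjA.homEquiv Y W).symm.injective
      rw [Equiv.symm_apply_apply]
      have e2 := keyAux j adjA adjB ((adjB.homEquiv Y W) b)
      rw [Equiv.symm_apply_apply] at e2
      exact e2
    have sq' : CommSq ((adjB.homEquiv X Z) (pushout.inr _ _ ≫ t)) i
        (pbHomAux j adjA adjB g)
        (pullback.lift ((adjA.homEquiv Y Z) (pushout.inl _ _ ≫ t))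
          ((adjB.homEquiv Y W) b) wcond) := by
      constructor
      apply pullback.hom_ext
      · rw [Category.assoc, hfst, Category.assoc, pullback.lift_fst]
        apply (adjA.homEquiv X Z).symm.injective
        rw [← keyAux, adjA.homEquiv_naturality_left_symm, Equiv.symm_apply_apply,
          Equiv.symm_apply_apply]
        show (j ▷ X) ≫ pushout.inr (A ◁ i) (j ▷ X) ≫ t =
          (A ◁ i) ≫ pushout.inl (A ◁ i) (j ▷ X) ≫ t
        rw [← Category.assoc, ← Category.assoc, pushout.condition]
      · rw [Category.assoc, hsnd, Category.assoc, pullback.lift_snd]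
        apply (adjB.homEquiv X W).symm.injective
        rw [adjB.homEquiv_naturality_right_symm, Equiv.symm_apply_apply,
          adjB.homEquiv_naturality_left_symm, Equiv.symm_apply_apply]
        exact winr
    obtain ⟨⟨l, facL, facR⟩⟩ := (hlift.sq_hasLift sq').exists_lift
    refine ⟨⟨⟨(adjB.homEquiv Y Z).symm l, ?_, ?_⟩⟩⟩
    · apply pushout.hom_ext
      · rw [← Category.assoc, hinl]
        have e2 : l ≫ tauAux j adjA adjB Z =
            (adjA.homEquiv Y Z) (pushout.inl _ _ ≫ t) := by
          rw [← hfst, ← Category.assoc, facR, pullback.lift_fst]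
        rw [keyAux, e2, Equiv.symm_apply_apply]
      · rw [← Category.assoc, hinr]
        have e1 : (tensorLeft B).map i ≫ (adjB.homEquiv Y Z).symm l =
            (adjB.homEquiv X Z).symm (i ≫ l) :=
          (adjB.homEquiv_naturality_left_symm i l).symm
        show (tensorLeft B).map i ≫ (adjB.homEquiv Y Z).symm l = pushout.inr _ _ ≫ t
        rw [e1, facL, Equiv.symm_apply_apply]
    · have e1 : (adjB.homEquiv Y Z).symm l ≫ g =
          (adjB.homEquiv Y W).symm (l ≫ RB.map g) :=
        (adjB.homEquiv_naturality_right_symm l g).symm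
      have e2 : l ≫ RB.map g = (adjB.homEquiv Y W) b := by
        rw [← hsnd, ← Category.assoc, facR, pullback.lift_snd]
      rw [e1, e2, Equiv.symm_apply_apply]

end Aux

/-- if `C` is complete and cocomplete with a biclosed monoidal product,
`j` a morphism, and `I, I'` sets of morphisms with `j ⊗̂ i ∈ llp(rlp(I'))` for all
`i ∈ I`, then `j ⊗̂ i ∈ llp(rlp(I'))` for all `i ∈ llp(rlp(I))`. -/
theorem pushoutProduct_llp_of_llp
    (hbicl₁ : ∀ A : C, (tensorLeft A).IsLeftAdjoint)
    (hbicl₂ : ∀ A : C, (tensorRight A).IsLeftAdjoint)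
    (I I' : MorphismProperty C) {A B : C} (j : A ⟶ B)
    (hj : ∀ ⦃X Y : C⦄ (i : X ⟶ Y), I i → llpOf (rlpOf I') (pushoutProduct j i)) :
    ∀ ⦃X Y : C⦄ (i : X ⟶ Y), llpOf (rlpOf I) i →
      llpOf (rlpOf I') (pushoutProduct j i) := by
  intro X Y i hi Z W g hg
  haveI := hbicl₁ A
  haveI := hbicl₁ B
  let adjA := Adjunction.ofIsLeftAdjoint (tensorLeft A)
  let adjB := Adjunction.ofIsLeftAdjoint (tensorLeft B)
  have hrlp : rlpOf I (pbHomAux j adjA adjB g) := by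
    intro X' Y' f hf
    exact (hlp_iff_aux j adjA adjB f g).mp (hj f hf g hg)
  exact (hlp_iff_aux j adjA adjB i g).mpr (hi _ hrlp)
end
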